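/- Assume s ≥ t+2 and let p ≥ 1 be an integer. Then for all invertible power series z, w ∈ R, the ideals I_{0,w} and I_{p,z} are not isomorphic, i.e. there is no k-algebra isomorphism R/I_{0,w} ≅ R/I_{p,z}. -/

import Mathlib

/-!
Write `𝔫` for the ideal generated by the nonunits of a ring `A` and call `x ∈ 𝔫` isotropic if
`x² ∈ 𝔫³`. Whether some isotropic `x` has `x𝔫 ⊄ 𝔫³` is invariant under ring isomorphisms.

In `R/I_{p,z}` with `p ≥ 1`, `x₂` is isotropic (`x₂² ≡ x₁^{p+1}x₂ + z x₁^{s-t+1} ∈ 𝔫³`), while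
`x₁x₂ ∉ 𝔫³ + I_{p,z}` because every element of that ideal has order `≥ 2` and no `x₁x₂` term.

In `R/I_{0,w}`, write an isotropic `f` as `∑ gᵢ xᵢ`. Along the lines `x = (T, 0, …, 0)` and
`x = (T, T, 0, …, 0)` the ideal `𝔫³ + I_{0,w}` vanishes to order three, so `T³ ∣ T²(∑ cᵢ gᵢ(cT))²`
and, `T` being prime, `g₁(0) = g₁(0) + g₂(0) = 0`. Hence `f ∈ 𝔫² + (x₃, …, x_h)`, and
`f𝔫 ⊆ 𝔫³ + I_{0,w}` since `xⱼxᵢ ∈ I_{0,w}` for `j ≥ 3`, `i ≠ j`, and `xⱼ² ≡ x₁ˢ`.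
-/

noncomputable section

open MvPowerSeries

/-- The maximal ideal `(x₁, …, x_h)` of the power series ring. -/
def nIdeal (k : Type*) [Field k] (h : ℕ) : Ideal (MvPowerSeries (Fin h) k) :=
  Ideal.span (Set.range (X : Fin h → MvPowerSeries (Fin h) k))

/-- The ideal generated (in terms of a system of generators `y`) by
`y i * y j` (`i < j`, `(i,j) ≠ (0,1)`), `y j ^ 2 - y 0 ^ s` (`j ≥ 2`),
`y 1 ^ 2 - y 0 ^ (p+1) * y 1 - w * y 0 ^ (s - t + 1)` and `y 0 ^ t * y 1`. -/
def Iy (k : Type*) [Field k] (n s t p : ℕ) (w : MvPowerSeries (Fin (n + 2)) k)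
    (y : Fin (n + 2) → MvPowerSeries (Fin (n + 2)) k) :
    Ideal (MvPowerSeries (Fin (n + 2)) k) :=
  Ideal.span
    ({f | ∃ i j : Fin (n + 2), i < j ∧ (i, j) ≠ (0, 1) ∧ f = y i * y j} ∪
     {f | ∃ j : Fin (n + 2), 2 ≤ (j : ℕ) ∧ f = y j ^ 2 - y 0 ^ s} ∪
     {y 1 ^ 2 - y 0 ^ (p + 1) * y 1 - w * y 0 ^ (s - t + 1), y 0 ^ t * y 1})

/-- The ideal `I_{p,z}`. -/
def Ipz (k : Type*) [Field k] (n s t p : ℕ) (z : MvPowerSeries (Fin (n + 2)) k) :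
    Ideal (MvPowerSeries (Fin (n + 2)) k) :=
  Iy k n s t p z X

/-- The ideal `I_a`. -/
def Ia (k : Type*) [Field k] (n s t : ℕ) (a : MvPowerSeries (Fin (n + 2)) k) :
    Ideal (MvPowerSeries (Fin (n + 2)) k) :=
  Ideal.span
    ({f | ∃ i j : Fin (n + 2), i < j ∧ (i, j) ≠ (0, 1) ∧ f = X i * X j} ∪
     {f | ∃ j : Fin (n + 2), 2 ≤ (j : ℕ) ∧ f = X j ^ 2 - X 0 ^ s} ∪
     {X 1 ^ 2 - a * X 0 * X 1 - X 0 ^ (s - t + 1), X 0 ^ t * X 1})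

/-- Two ideals are isomorphic iff the quotient `k`-algebras are isomorphic. -/
def IdealIso (k : Type*) [Field k] {h : ℕ} (I J : Ideal (MvPowerSeries (Fin h) k)) : Prop :=
  Nonempty ((MvPowerSeries (Fin h) k ⧸ I) ≃ₐ[k] (MvPowerSeries (Fin h) k ⧸ J))

/-- The ideal `(x₂, …, x_h)`. -/
def offIdeal (k : Type*) [Field k] (n : ℕ) : Ideal (MvPowerSeries (Fin (n + 2)) k) :=
  Ideal.span {f | ∃ i : Fin (n + 2), i ≠ 0 ∧ f = X i}

end

namespace MvPowerSeries

variable {σ R : Type*} [CommRing R]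

theorem constantCoeff_eq_zero_of_mem_span_range_X {f : MvPowerSeries σ R}
    (hf : f ∈ Ideal.span (Set.range X)) : constantCoeff f = 0 := by
  refine (Ideal.span_le (I := RingHom.ker constantCoeff)).2 ?_ hf
  rintro _ ⟨i, rfl⟩
  exact constantCoeff_X i

theorem mem_span_range_X_iff [Finite σ] {f : MvPowerSeries σ R} :
    f ∈ Ideal.span (Set.range X) ↔ constantCoeff f = 0 := by
  refine ⟨constantCoeff_eq_zero_of_mem_span_range_X, fun hf => ?_⟩
  -- `MvPowerSeries σ R` is the completion of `MvPolynomial σ R` at the ideal of the variables,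
  -- and at level one `f` becomes its constant coefficient.
  let e := (toAdicCompletionAlgEquiv σ R).toRingEquiv
  have hmap : Ideal.map e (Ideal.span (Set.range X)) =
      (MvPolynomial.idealOfVars σ R).map (algebraMap ..) := by
    simp_rw [Ideal.map_span, ← Set.range_comp]
    congr 2; ext1
    simp [e, AdicCompletion.algebraMap_apply, ← MvPolynomial.coe_X, toAdicCompletion_coe]
  rw [← Ideal.apply_mem_of_equiv_iff (f := e), hmap,
    ← AdicCompletion.ker_evalOneₐ_eq_map _ (MvPolynomial.idealOfVars_fg σ R), RingHom.mem_ker]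
  change Ideal.Quotient.mk _ (truncTotal 1 f) = 0
  rw [Ideal.Quotient.eq_zero_iff_mem, ← pow_one (MvPolynomial.idealOfVars σ R),
    MvPolynomial.mem_pow_idealOfVars_iff']
  intro d hd
  rw [coeff_truncTotal _ hd, (Finsupp.degree_eq_zero_iff d).1 (by omega),
    coeff_zero_eq_constantCoeff_apply, hf]

theorem maximalIdeal_eq_span_range_X {k : Type*} [Field k] [Finite σ] :
    IsLocalRing.maximalIdeal (MvPowerSeries σ k) = Ideal.span (Set.range X) := by
  ext f
  rw [IsLocalRing.mem_maximalIdeal, mem_nonunits_iff, mem_span_range_X_iff,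
    isUnit_iff_constantCoeff, isUnit_iff_ne_zero, not_not]

theorem le_order_of_mem_pow_span_range_X {m : ℕ} {f : MvPowerSeries σ R}
    (hf : f ∈ Ideal.span (Set.range X) ^ m) : (m : ℕ∞) ≤ f.order := by
  induction m generalizing f with
  | zero => simp
  | succ m ih =>
    rw [pow_succ] at hf
    refine Submodule.mul_induction_on hf (fun x hx y hy => ?_) (fun x y hx hy => ?_)
    · calc ((m + 1 : ℕ) : ℕ∞) = m + 1 := by push_cast; rfl
        _ ≤ x.order + y.order := add_le_add (ih hx)
          (one_le_order_iff_constCoeff_eq_zero.2 (constantCoeff_eq_zero_of_mem_span_range_X hy))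
        _ ≤ (x * y).order := le_order_mul
    · exact (le_min hx hy).trans min_order_le_add

theorem coeff_mul_of_degree_le_order {d : σ →₀ ℕ} {f : MvPowerSeries σ R}
    (hf : (d.degree : ℕ∞) ≤ f.order) (r : MvPowerSeries σ R) :
    coeff d (r * f) = constantCoeff r * coeff d f := by
  have hr : 1 ≤ (r - C (constantCoeff r)).order :=
    one_le_order_iff_constCoeff_eq_zero.2 (by simp)
  have hlt : (d.degree : ℕ∞) < ((r - C (constantCoeff r)) * f).order :=
    calc (d.degree : ℕ∞) < 1 + d.degree := by rw [add_comm]; exact_mod_cast Nat.lt_succ_self _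
      _ ≤ (r - C (constantCoeff r)).order + f.order := add_le_add hr hf
      _ ≤ _ := le_order_mul
  rw [show r * f = C (constantCoeff r) * f + (r - C (constantCoeff r)) * f by ring, map_add,
    coeff_C_mul, coeff_of_lt_order hlt, add_zero]

def coeffVanishingIdeal (d : σ →₀ ℕ) : Ideal (MvPowerSeries σ R) where
  carrier := {f | (d.degree : ℕ∞) ≤ f.order ∧ coeff d f = 0}
  add_mem' := fun ⟨ha, ha'⟩ ⟨hb, hb'⟩ =>
    ⟨(le_min ha hb).trans min_order_le_add, by rw [map_add, ha', hb', add_zero]⟩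
  zero_mem' := by simp
  smul_mem' r f := fun ⟨hf, hf'⟩ =>
    ⟨hf.trans (le_add_self.trans le_order_mul),
      by rw [smul_eq_mul, coeff_mul_of_degree_le_order hf, hf', mul_zero]⟩

theorem monomial_mem_coeffVanishingIdeal {d e : σ →₀ ℕ} (hde : e.degree = d.degree)
    (hne : e ≠ d) (a : R) : monomial e a ∈ coeffVanishingIdeal d :=
  ⟨le_order fun d' hd' => coeff_monomial_ne (by rintro rfl; simp [hde] at hd') a,
    coeff_monomial_ne hne.symm a⟩

theorem pow_le_coeffVanishingIdeal (d : σ →₀ ℕ) :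
    Ideal.span (Set.range X) ^ (d.degree + 1) ≤ coeffVanishingIdeal (R := R) d := fun _ hf =>
  have h := le_order_of_mem_pow_span_range_X hf
  ⟨le_trans (by simp) h,
    coeff_of_lt_order (lt_of_lt_of_le (by exact_mod_cast Nat.lt_succ_self _) h)⟩

section SubstLine

variable {k : Type*} [Field k] [Finite σ]

theorem hasSubst_C_mul_X (c : σ → k) : HasSubst fun i => PowerSeries.C (c i) * PowerSeries.X :=
  hasSubst_of_constantCoeff_zero fun i => by
    change PowerSeries.constantCoeff (_ * _) = 0
    simp

/-- `f ↦ f(c₁T, …, c_hT)`. -/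
noncomputable def substLine (c : σ → k) : MvPowerSeries σ k →ₐ[k] PowerSeries k :=
  substAlgHom (hasSubst_C_mul_X c)

theorem substLine_X (c : σ → k) (i : σ) :
    substLine c (X i) = PowerSeries.C (c i) * PowerSeries.X :=
  substAlgHom_X _ i

theorem map_substLine_span_range_X_le (c : σ → k) :
    (Ideal.span (Set.range X)).map (substLine c) ≤ Ideal.span {PowerSeries.X} := by
  rw [Ideal.map_span, Ideal.span_le]
  rintro _ ⟨_, ⟨i, rfl⟩, rfl⟩
  rw [substLine_X]
  exact Ideal.mul_mem_left _ _ (Ideal.mem_span_singleton_self _)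

theorem constantCoeff_substLine (c : σ → k) (f : MvPowerSeries σ k) :
    PowerSeries.constantCoeff (substLine c f) = constantCoeff f := by
  have h : substLine c (f - C (constantCoeff f)) ∈ Ideal.span {PowerSeries.X} :=
    map_substLine_span_range_X_le c (Ideal.mem_map_of_mem _ (mem_span_range_X_iff.2 (by simp)))
  rw [Ideal.mem_span_singleton, PowerSeries.X_dvd_iff, map_sub, c_eq_algebraMap,
    AlgHom.commutes, map_sub, sub_eq_zero] at h
  simpa using h

end SubstLine

theorem sum_mul_constantCoeff_eq_zero_of_substLine_sq_mem {k : Type*} [Field k] [Fintype σ]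
    (c : σ → k) (g : σ → MvPowerSeries σ k)
    (h : substLine c ((∑ i, g i * X i) ^ 2) ∈ Ideal.span {PowerSeries.X ^ 3}) :
    ∑ i, c i * constantCoeff (g i) = 0 := by
  set H := ∑ i, PowerSeries.C (c i) * substLine c (g i)
  have hf : substLine c (∑ i, g i * X i) = PowerSeries.X * H := by
    simp only [map_sum, map_mul, substLine_X, H, Finset.mul_sum]
    exact Finset.sum_congr rfl fun i _ => by ring
  rw [map_pow, hf, Ideal.mem_span_singleton] at h
  have hXH : PowerSeries.X ∣ H ^ 2 := by
    refine (mul_dvd_mul_iff_left (pow_ne_zero 2 PowerSeries.X_ne_zero)).1 ?_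
    rw [← pow_succ, ← mul_pow]
    exact h
  have hH := PowerSeries.X_dvd_iff.1 (PowerSeries.X_prime.dvd_of_dvd_pow hXH)
  simpa [H, constantCoeff_substLine] using hH

end MvPowerSeries

section IsotropicTangent

variable {A B : Type*} [CommRing A] [CommRing B]

theorem Ideal.map_span_nonunits (e : A ≃+* B) :
    (Ideal.span (nonunits A)).map e = Ideal.span (nonunits B) := by
  rw [Ideal.map_span]
  congr 1
  ext b
  refine ⟨?_, fun hb => ⟨e.symm b, ?_, e.apply_symm_apply b⟩⟩
  · rintro ⟨a, ha, rfl⟩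
    exact (MulEquiv.isUnit_map e).not.2 ha
  · exact (MulEquiv.isUnit_map e.symm).not.2 hb

/-- In the graded ring `⊕ 𝔫ⁱ/𝔫ⁱ⁺¹` of the ideal `𝔫` generated by the nonunits, some element of
degree one squares to zero without annihilating the degree-one part. -/
def HasIsotropicTangent (A : Type*) [CommRing A] : Prop :=
  ∃ x ∈ nonunits A, ∃ y ∈ nonunits A,
    x * x ∈ Ideal.span (nonunits A) ^ 3 ∧ x * y ∉ Ideal.span (nonunits A) ^ 3

theorem HasIsotropicTangent.of_ringEquiv (e : A ≃+* B) (h : HasIsotropicTangent A) :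
    HasIsotropicTangent B := by
  obtain ⟨x, hx, y, hy, hxx, hxy⟩ := h
  have hmem : ∀ a : A, e a ∈ Ideal.span (nonunits B) ^ 3 ↔ a ∈ Ideal.span (nonunits A) ^ 3 :=
    fun a => by rw [← Ideal.map_span_nonunits e, ← Ideal.map_pow, Ideal.apply_mem_of_equiv_iff]
  refine ⟨e x, (MulEquiv.isUnit_map e).not.2 hx, e y, (MulEquiv.isUnit_map e).not.2 hy, ?_, ?_⟩
  · rwa [← map_mul, hmem]
  · rwa [← map_mul, hmem]

variable {R : Type*} [CommRing R] [IsLocalRing R] {I : Ideal R}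

open IsLocalRing

theorem Ideal.Quotient.mk_mem_nonunits_iff (hI : I ≤ maximalIdeal R) {f : R} :
    Ideal.Quotient.mk I f ∈ nonunits (R ⧸ I) ↔ f ∈ maximalIdeal R := by
  have := isLocalHom_of_le_jacobson_bot I (hI.trans (jacobson_eq_maximalIdeal ⊥ bot_ne_top).ge)
  rw [mem_maximalIdeal, mem_nonunits_iff, mem_nonunits_iff, isUnit_map_iff]

theorem Ideal.Quotient.mk_mem_span_nonunits_pow_iff (hI : I ≤ maximalIdeal R) {f : R} (m : ℕ) :
    Ideal.Quotient.mk I f ∈ Ideal.span (nonunits (R ⧸ I)) ^ m ↔ f ∈ maximalIdeal R ^ m ⊔ I := by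
  have hspan : Ideal.span (nonunits (R ⧸ I)) = (maximalIdeal R).map (Ideal.Quotient.mk I) := by
    conv_rhs => rw [← Ideal.span_eq (maximalIdeal R), Ideal.map_span]
    congr 1
    ext x
    obtain ⟨f, rfl⟩ := Ideal.Quotient.mk_surjective x
    refine ⟨fun hf => ⟨f, (mk_mem_nonunits_iff hI).1 hf, rfl⟩, ?_⟩
    rintro ⟨g, hg, hgf⟩
    exact hgf ▸ (mk_mem_nonunits_iff hI).2 hg
  rw [hspan, ← Ideal.map_pow, ← Ideal.mem_comap,
    Ideal.comap_map_of_surjective' _ Ideal.Quotient.mk_surjective, Ideal.mk_ker]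

theorem hasIsotropicTangent_quotient_iff (hI : I ≤ maximalIdeal R) :
    HasIsotropicTangent (R ⧸ I) ↔ ∃ f ∈ maximalIdeal R, ∃ g ∈ maximalIdeal R,
      f * f ∈ maximalIdeal R ^ 3 ⊔ I ∧ f * g ∉ maximalIdeal R ^ 3 ⊔ I := by
  simp only [HasIsotropicTangent, Ideal.Quotient.mk_surjective.exists, ← map_mul,
    Ideal.Quotient.mk_mem_nonunits_iff hI, Ideal.Quotient.mk_mem_span_nonunits_pow_iff hI]

end IsotropicTangent

section Ipz

open MvPowerSeries

variable {k : Type*} [Field k] {n s t : ℕ}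

theorem nIdeal_eq_maximalIdeal (h : ℕ) :
    nIdeal k h = IsLocalRing.maximalIdeal (MvPowerSeries (Fin h) k) :=
  maximalIdeal_eq_span_range_X.symm

theorem X_mem_nIdeal {h : ℕ} (i : Fin h) : X i ∈ nIdeal k h :=
  Ideal.subset_span ⟨i, rfl⟩

theorem X_pow_mem_nIdeal_pow {h : ℕ} (i : Fin h) {a m : ℕ} (ham : a ≤ m) :
    X i ^ m ∈ nIdeal k h ^ a :=
  Ideal.pow_le_pow_right ham (Ideal.pow_mem_pow (X_mem_nIdeal i) m)

theorem X_pow_mul_X_mem_nIdeal_pow_three {h : ℕ} (i j : Fin h) {m : ℕ} (hm : 2 ≤ m) :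
    X i ^ m * X j ∈ nIdeal k h ^ 3 :=
  Ideal.pow_le_pow_right (by omega : 3 ≤ m + 1)
    (pow_succ (nIdeal k h) m ▸ Ideal.mul_mem_mul (Ideal.pow_mem_pow (X_mem_nIdeal i) m)
      (X_mem_nIdeal j))

theorem Fin.ne_zero_of_two_le {j : Fin (n + 2)} (hj : 2 ≤ (j : ℕ)) : j ≠ 0 := by
  rintro rfl
  simp at hj

theorem Fin.ne_one_of_two_le {j : Fin (n + 2)} (hj : 2 ≤ (j : ℕ)) : j ≠ 1 := by
  rintro rfl
  simp at hj

theorem two_le_of_lt_of_ne_zero_one {i j : Fin (n + 2)} (hij : i < j) (hne : (i, j) ≠ (0, 1)) :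
    2 ≤ (j : ℕ) := by
  by_contra hj
  have hij' : (i : ℕ) < j := hij
  have hi0 : i = 0 := Fin.ext (by rw [Fin.val_zero]; omega)
  have hj1 : j = 1 := Fin.ext (by rw [Fin.val_one]; omega)
  exact hne (by rw [hi0, hj1])

theorem X_mul_X_mem_Ipz {p : ℕ} (z : MvPowerSeries (Fin (n + 2)) k) {i j : Fin (n + 2)}
    (hi : 2 ≤ (i : ℕ)) (hij : i ≠ j) : X i * X j ∈ Ipz k n s t p z := by
  refine Ideal.subset_span (Set.mem_union_left _ (Set.mem_union_left _ ?_))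
  rcases hij.lt_or_gt with h | h
  · exact ⟨i, j, h, fun he => Fin.ne_zero_of_two_le hi (Prod.ext_iff.1 he).1, rfl⟩
  · exact ⟨j, i, h, fun he => Fin.ne_one_of_two_le hi (Prod.ext_iff.1 he).2, mul_comm _ _⟩

theorem Ipz_le_of_mem {p : ℕ} (ht : 2 ≤ t) (hs : t + 2 ≤ s) (z : MvPowerSeries (Fin (n + 2)) k)
    {K : Ideal (MvPowerSeries (Fin (n + 2)) k)} (hK : nIdeal k (n + 2) ^ 3 ≤ K)
    (hmul : ∀ i j : Fin (n + 2), 2 ≤ (j : ℕ) → (X i * X j : MvPowerSeries (Fin (n + 2)) k) ∈ K)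
    (hX1 : (X 1 ^ 2 - X 0 ^ (p + 1) * X 1 : MvPowerSeries (Fin (n + 2)) k) ∈ K) :
    Ipz k n s t p z ≤ K := by
  rw [Ipz, Iy, Ideal.span_le]
  rintro f ((⟨i, j, hij, hne, rfl⟩ | ⟨j, hj, rfl⟩) | hf)
  · exact hmul i j (two_le_of_lt_of_ne_zero_one hij hne)
  · exact sub_mem (by rw [sq]; exact hmul j j hj) (hK (X_pow_mem_nIdeal_pow 0 (by omega)))
  · rcases hf with rfl | rfl
    · exact sub_mem hX1 (hK (Ideal.mul_mem_left _ z (X_pow_mem_nIdeal_pow 0 (by omega))))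
    · exact hK (X_pow_mul_X_mem_nIdeal_pow_three 0 1 ht)

theorem Ipz_le_maximalIdeal {p : ℕ} (ht : 2 ≤ t) (hs : t + 2 ≤ s)
    (z : MvPowerSeries (Fin (n + 2)) k) :
    Ipz k n s t p z ≤ IsLocalRing.maximalIdeal (MvPowerSeries (Fin (n + 2)) k) :=
  (Ipz_le_of_mem ht hs z (Ideal.pow_le_self (by norm_num))
    (fun _ j _ => Ideal.mul_mem_left _ _ (X_mem_nIdeal j))
    (sub_mem (Ideal.pow_mem_of_mem _ (X_mem_nIdeal 1) 2 two_pos)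
      (Ideal.mul_mem_left _ _ (X_mem_nIdeal 1)))).trans (nIdeal_eq_maximalIdeal _).le

theorem X_mul_mem_sup_Ipz {p : ℕ} (hs : 3 ≤ s) (z : MvPowerSeries (Fin (n + 2)) k)
    {i : Fin (n + 2)} (hi : 2 ≤ (i : ℕ)) {g : MvPowerSeries (Fin (n + 2)) k}
    (hg : g ∈ nIdeal k (n + 2)) : X i * g ∈ nIdeal k (n + 2) ^ 3 ⊔ Ipz k n s t p z := by
  obtain ⟨b, rfl⟩ := Ideal.mem_span_range_iff_exists_fun.1 hg
  rw [Finset.mul_sum]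
  refine Ideal.sum_mem _ fun j _ => ?_
  rw [mul_left_comm]
  refine Ideal.mul_mem_left _ _ ?_
  rcases eq_or_ne i j with rfl | hij
  · rw [← sq, ← sub_add_cancel (X i ^ 2) (X 0 ^ s)]
    exact add_mem (Ideal.mem_sup_right (Ideal.subset_span
        (Set.mem_union_left _ (Set.mem_union_right _ ⟨i, hi, rfl⟩))))
      (Ideal.mem_sup_left (X_pow_mem_nIdeal_pow 0 hs))
  · exact Ideal.mem_sup_right (X_mul_X_mem_Ipz z hi hij)

theorem X_mul_X_eq_monomial {h : ℕ} (i j : Fin h) :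
    (X i * X j : MvPowerSeries (Fin h) k) =
      monomial (Finsupp.single i 1 + Finsupp.single j 1) 1 := by
  rw [X_def, X_def, monomial_mul_monomial, one_mul]

theorem sup_Ipz_le_coeffVanishingIdeal {p : ℕ} (ht : 2 ≤ t) (hs : t + 2 ≤ s) (hp : 1 ≤ p)
    (z : MvPowerSeries (Fin (n + 2)) k) :
    nIdeal k (n + 2) ^ 3 ⊔ Ipz k n s t p z ≤
      coeffVanishingIdeal (Finsupp.single 0 1 + Finsupp.single 1 1) := by
  have hdeg : (Finsupp.single (0 : Fin (n + 2)) 1 + Finsupp.single 1 1).degree = 2 := by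
    simp [map_add]
  have hK :
      nIdeal k (n + 2) ^ 3 ≤ coeffVanishingIdeal (Finsupp.single 0 1 + Finsupp.single 1 1) := by
    have h := pow_le_coeffVanishingIdeal (R := k)
      (Finsupp.single (0 : Fin (n + 2)) 1 + Finsupp.single 1 1)
    rw [hdeg] at h
    exact h
  refine sup_le hK (Ipz_le_of_mem ht hs z hK (fun i j hj => ?_) (sub_mem ?_ (hK ?_)))
  · rw [X_mul_X_eq_monomial]
    refine monomial_mem_coeffVanishingIdeal (by simp [map_add, hdeg]) (fun he => ?_) 1
    have := DFunLike.congr_fun he j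
    simp [Finsupp.single_apply, Fin.ne_zero_of_two_le hj, Fin.ne_one_of_two_le hj] at this
  · rw [X_pow_eq]
    refine monomial_mem_coeffVanishingIdeal (by simp [hdeg]) (fun he => ?_) 1
    have := DFunLike.congr_fun he 1
    simp at this
  · exact X_pow_mul_X_mem_nIdeal_pow_three 0 1 (by omega)

theorem hasIsotropicTangent_quotient_Ipz {p : ℕ} (ht : 2 ≤ t) (hs : t + 2 ≤ s) (hp : 1 ≤ p)
    (z : MvPowerSeries (Fin (n + 2)) k) :
    HasIsotropicTangent (MvPowerSeries (Fin (n + 2)) k ⧸ Ipz k n s t p z) := by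
  rw [hasIsotropicTangent_quotient_iff (Ipz_le_maximalIdeal ht hs z), ← nIdeal_eq_maximalIdeal]
  refine ⟨X 1, X_mem_nIdeal 1, X 0, X_mem_nIdeal 0, ?_, fun h => ?_⟩
  · rw [show (X 1 * X 1 : MvPowerSeries (Fin (n + 2)) k) =
        (X 1 ^ 2 - X 0 ^ (p + 1) * X 1 - z * X 0 ^ (s - t + 1)) +
          (X 0 ^ (p + 1) * X 1 + z * X 0 ^ (s - t + 1)) by ring]
    refine add_mem (Ideal.mem_sup_right (Ideal.subset_span
      (Set.mem_union_right _ (Set.mem_insert _ _)))) (Ideal.mem_sup_left (add_mem ?_ ?_))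
    · exact X_pow_mul_X_mem_nIdeal_pow_three 0 1 (by omega)
    · exact Ideal.mul_mem_left _ z (X_pow_mem_nIdeal_pow 0 (by omega))
  · have := (sup_Ipz_le_coeffVanishingIdeal ht hs hp z h).2
    rw [X_mul_X_eq_monomial, add_comm (Finsupp.single (1 : Fin (n + 2)) 1),
      coeff_monomial_same] at this
    exact one_ne_zero this

theorem sup_Ipz_zero_le_comap_substLine (ht : 2 ≤ t) (hs : t + 2 ≤ s)
    (w : MvPowerSeries (Fin (n + 2)) k) {c : Fin (n + 2) → k}
    (hc : ∀ j : Fin (n + 2), 2 ≤ (j : ℕ) → c j = 0) (hc1 : c 1 * c 1 = c 0 * c 1) :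
    nIdeal k (n + 2) ^ 3 ⊔ Ipz k n s t 0 w ≤
      (Ideal.span {PowerSeries.X ^ 3}).comap (substLine c) := by
  have hK : nIdeal k (n + 2) ^ 3 ≤ (Ideal.span {PowerSeries.X ^ 3}).comap (substLine c) := by
    rw [← Ideal.map_le_iff_le_comap, Ideal.map_pow, ← Ideal.span_singleton_pow]
    exact Ideal.pow_right_mono (map_substLine_span_range_X_le c) 3
  refine sup_le hK (Ipz_le_of_mem ht hs w hK (fun i j hj => ?_) ?_) <;>
    rw [Ideal.mem_comap]
  · simp [substLine_X, hc j hj]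
  · simp only [map_sub, map_pow, map_mul, substLine_X, zero_add, pow_one]
    rw [show ∀ a b : k, (PowerSeries.C a * PowerSeries.X) ^ 2 -
        PowerSeries.C b * PowerSeries.X * (PowerSeries.C a * PowerSeries.X) =
          PowerSeries.C (a * a - b * a) * PowerSeries.X ^ 2 from fun a b => by simp; ring,
      hc1, sub_self, map_zero, zero_mul]
    exact zero_mem _

theorem mul_mem_sup_Ipz_zero_of_mul_self_mem (ht : 2 ≤ t) (hs : t + 2 ≤ s)
    (w : MvPowerSeries (Fin (n + 2)) k)
    {f g : MvPowerSeries (Fin (n + 2)) k} (hf : f ∈ nIdeal k (n + 2)) (hg : g ∈ nIdeal k (n + 2))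
    (hff : f * f ∈ nIdeal k (n + 2) ^ 3 ⊔ Ipz k n s t 0 w) :
    f * g ∈ nIdeal k (n + 2) ^ 3 ⊔ Ipz k n s t 0 w := by
  obtain ⟨a, rfl⟩ := Ideal.mem_span_range_iff_exists_fun.1 hf
  have hlin (c : Fin (n + 2) → k) (hc : ∀ j : Fin (n + 2), 2 ≤ (j : ℕ) → c j = 0)
      (hc1 : c 1 * c 1 = c 0 * c 1) : ∑ i, c i * constantCoeff (a i) = 0 :=
    sum_mul_constantCoeff_eq_zero_of_substLine_sq_mem c a (sq (∑ i, a i * X i) ▸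
      sup_Ipz_zero_le_comap_substLine ht hs w hc hc1 hff)
  have h0 : constantCoeff (a 0) = 0 := by
    simpa [Pi.single_apply, ite_mul] using hlin (Pi.single 0 1)
      (fun j hj => Pi.single_eq_of_ne (Fin.ne_zero_of_two_le hj) _) (by simp)
  have h1 : constantCoeff (a 1) = 0 := by
    have h := hlin (Pi.single 0 1 + Pi.single 1 1)
        (fun j hj => by simp [Fin.ne_zero_of_two_le hj, Fin.ne_one_of_two_le hj]) (by simp)
    simp only [Pi.add_apply, add_mul, Finset.sum_add_distrib] at h
    simpa [Pi.single_apply, ite_mul, h0] using h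
  rw [Finset.sum_mul]
  refine Ideal.sum_mem _ fun i _ => ?_
  by_cases hi : 2 ≤ (i : ℕ)
  · rw [mul_assoc]
    exact Ideal.mul_mem_left _ _ (X_mul_mem_sup_Ipz (by omega) w hi hg)
  · have hai : a i ∈ nIdeal k (n + 2) := by
      refine mem_span_range_X_iff.2 ?_
      obtain rfl | rfl : i = 0 ∨ i = 1 := by
        rw [Fin.ext_iff, Fin.ext_iff, Fin.val_zero, Fin.val_one]
        omega
      exacts [h0, h1]
    refine Ideal.mem_sup_left ?_
    rw [pow_three']
    exact Ideal.mul_mem_mul (Ideal.mul_mem_mul hai (X_mem_nIdeal i)) hg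

theorem not_hasIsotropicTangent_quotient_Ipz_zero (ht : 2 ≤ t) (hs : t + 2 ≤ s)
    (w : MvPowerSeries (Fin (n + 2)) k) :
    ¬ HasIsotropicTangent (MvPowerSeries (Fin (n + 2)) k ⧸ Ipz k n s t 0 w) := by
  rw [hasIsotropicTangent_quotient_iff (Ipz_le_maximalIdeal ht hs w), ← nIdeal_eq_maximalIdeal]
  rintro ⟨f, hf, g, hg, hff, hfg⟩
  exact hfg (mul_mem_sup_Ipz_zero_of_mul_self_mem ht hs w hf hg hff)

end Ipz

open MvPowerSeries in
theorem stmt_10_general {k : Type*} [Field k] (n s t : ℕ)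
    (ht : 3 ≤ t + 1) (hs2 : t + 2 ≤ s)
    (p : ℕ) (hp : 1 ≤ p)
    (z w : MvPowerSeries (Fin (n + 2)) k) :
    ¬ IdealIso k (Ipz k n s t 0 w) (Ipz k n s t p z) := by
  rintro ⟨e⟩
  exact not_hasIsotropicTangent_quotient_Ipz_zero (by omega) hs2 w
    ((hasIsotropicTangent_quotient_Ipz (by omega) hs2 hp z).of_ringEquiv e.symm.toRingEquiv)

open MvPowerSeries in
/-- If `s ≥ t + 2` and `p ≥ 1`, then for all invertible `z, w` the ideals `I_{0,w}` and
`I_{p,z}` are not isomorphic. -/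
theorem stmt_10 {k : Type*} [Field k] [IsAlgClosed k] [CharZero k] (n s t : ℕ)
    (hst : t + 1 ≤ s) (ht : 3 ≤ t + 1) (hs2 : t + 2 ≤ s)
    (p : ℕ) (hp : 1 ≤ p)
    (z w : MvPowerSeries (Fin (n + 2)) k) (hz : IsUnit z) (hw : IsUnit w) :
    ¬ IdealIso k (Ipz k n s t 0 w) (Ipz k n s t p z) :=
  stmt_10_general n s t ht hs2 p hp z w
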